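/- Projecting the first tensor factor of the N-level singlet |S_N⟩ onto a standard basis vector e_i yields (up to normalization and sign) the product e_i ⊗ |S_{N−1}^{(i)}⟩, where |S_{N−1}^{(i)}⟩ is the (N−1)-party singlet on the levels {1,…,N}∖{i}; moreover each outcome i occurs with probability 1/N. -/

import Mathlib

/-- The `N`-level singlet `(1/√N!) Σ_{σ∈S_N} sgn(σ) e_{σ(1)} ⊗ ⋯ ⊗ e_{σ(N)}`. -/
noncomputable def singlet (N : ℕ) : EuclideanSpace ℂ (Fin N → Fin N) :=
  ((Real.sqrt N.factorial : ℂ))⁻¹ • ∑ σ : Equiv.Perm (Fin N),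
    ((Equiv.Perm.sign σ : ℤ) : ℂ) • EuclideanSpace.single (⇑σ) (1 : ℂ)

/-- The order-preserving enumeration of `{1,…,N} ∖ {i}` by `Fin (N-1)`. -/
noncomputable def missing {N : ℕ} (i : Fin N) : Fin (N - 1) → Fin N :=
  fun j => (Finset.univ.erase i).orderEmbOfFin
    (by simp [Finset.card_erase_of_mem]) j

/-- The `(N−1)`-party singlet `|S_{N−1}^{(i)}⟩` built from `{e_l : l ≠ i}`. -/
noncomputable def subSinglet {N : ℕ} (i : Fin N) :
    EuclideanSpace ℂ (Fin (N - 1) → Fin N) :=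
  ((Real.sqrt (N - 1).factorial : ℂ))⁻¹ • ∑ τ : Equiv.Perm (Fin (N - 1)),
    ((Equiv.Perm.sign τ : ℤ) : ℂ) •
      EuclideanSpace.single (fun j => missing i (τ j)) (1 : ℂ)

/-- The product state `e_i ⊗ χ` in `(ℂ^N)^{⊗N}`. -/
noncomputable def prodState {N : ℕ} (hN : 0 < N) (i : Fin N)
    (χ : EuclideanSpace ℂ (Fin (N - 1) → Fin N)) :
    EuclideanSpace ℂ (Fin N → Fin N) :=
  WithLp.toLp 2 fun f => (if f ⟨0, hN⟩ = i then 1 else 0) *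
    χ (fun j => f ⟨j.1 + 1, by have := j.2; omega⟩)

/-- The projection `|e_i⟩⟨e_i| ⊗ I^{⊗(N−1)}` applied to `ψ`. -/
noncomputable def projFirstStd {d N : ℕ} (hN : 0 < N) (i : Fin d)
    (ψ : EuclideanSpace ℂ (Fin N → Fin d)) : EuclideanSpace ℂ (Fin N → Fin d) :=
  WithLp.toLp 2 fun f => if f ⟨0, hN⟩ = i then ψ f else 0

/-!
A permutation `σ` of `Fin (m + 1)` with `σ 0 = i` is the same thing as a permutation `τ`
of `Fin m`, via `σ = Fin.cons i (i.succAbove ∘ τ)`; as a permutation this is `τ` acting on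
the last `m` slots followed by the cycle `i.cycleRange⁻¹`, so `sgn σ = (-1)^i · sgn τ`.
Hence the terms of `|S_N⟩` that survive the projection are exactly `(-1)^i` times the terms
of `e_i ⊗ |S_{N-1}^{(i)}⟩`, up to the normalizations `1/√(N!)` and `1/√((N-1)!)`. These
`(N-1)!` terms are orthonormal, so the squared norm of the projection is `(N-1)!/N! = 1/N`.
-/

open Equiv Equiv.Perm Finset

lemma missing_eq_succAbove {m : ℕ} (i : Fin (m + 1)) : missing i = i.succAbove :=
  funext fun j => (congrFun (orderEmbOfFin_unique (by simp [card_erase_of_mem])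
    (fun x => mem_erase.2 ⟨i.succAbove_ne x, mem_univ _⟩) i.strictMono_succAbove) j).symm

section ConsSuccAbovePerm

variable {m : ℕ} (i : Fin (m + 1)) (τ : Perm (Fin m))

noncomputable def consSuccAbovePerm : Perm (Fin (m + 1)) :=
  (decomposeFin.symm (0, τ)).trans i.cycleRange.symm

lemma coe_consSuccAbovePerm : ⇑(consSuccAbovePerm i τ) = Fin.cons i (i.succAbove ∘ τ) := by
  ext j
  cases j using Fin.cases <;> simp [consSuccAbovePerm]

lemma sign_consSuccAbovePerm : sign (consSuccAbovePerm i τ) = (-1) ^ (i : ℕ) * sign τ := by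
  rw [consSuccAbovePerm, sign_trans, decomposeFin.symm_sign, if_pos rfl, one_mul, sign_symm,
    Fin.sign_cycleRange, mul_comm]

lemma cons_succAbove_comp_injective :
    Function.Injective fun τ : Perm (Fin m) =>
      (Fin.cons i (i.succAbove ∘ τ) : Fin (m + 1) → Fin (m + 1)) :=
  fun _ _ h => Equiv.ext fun j => i.succAbove_right_injective (by simpa using congrFun h j.succ)

lemma consSuccAbovePerm_injective : Function.Injective (consSuccAbovePerm i) :=
  fun _ _ h => cons_succAbove_comp_injective i <| by
    simpa only [coe_consSuccAbovePerm] using congrArg DFunLike.coe h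

lemma exists_consSuccAbovePerm_eq {σ : Perm (Fin (m + 1))} (hσ : σ 0 = i) :
    ∃ τ, consSuccAbovePerm i τ = σ := by
  obtain ⟨⟨p, τ⟩, hρ⟩ := decomposeFin.symm.surjective (σ.trans i.cycleRange)
  have hp : p = 0 := by simpa [hσ] using congrArg (· 0) hρ
  refine ⟨τ, ?_⟩
  rw [consSuccAbovePerm, ← hp, hρ]
  ext j
  simp

lemma sum_filter_apply_zero_eq {M : Type*} [AddCommMonoid M] (g : Perm (Fin (m + 1)) → M) :
    ∑ σ with σ 0 = i, g σ = ∑ τ, g (consSuccAbovePerm i τ) := by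
  refine (sum_nbij (consSuccAbovePerm i) (fun τ _ => ?_)
    (consSuccAbovePerm_injective i).injOn (fun σ hσ => ?_) (fun _ _ => rfl)).symm
  · simp [coe_consSuccAbovePerm]
  · obtain ⟨τ, rfl⟩ := exists_consSuccAbovePerm_eq i (mem_filter.1 hσ).2
    exact ⟨τ, mem_univ _, rfl⟩

end ConsSuccAbovePerm

section ProjFirstStd

variable {d N : ℕ} (hN : 0 < N) (i : Fin d)

lemma projFirstStd_smul (c : ℂ) (ψ : EuclideanSpace ℂ (Fin N → Fin d)) :
    projFirstStd hN i (c • ψ) = c • projFirstStd hN i ψ := by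
  ext f
  simp [projFirstStd]

lemma projFirstStd_sum {ι : Type*} (s : Finset ι)
    (ψ : ι → EuclideanSpace ℂ (Fin N → Fin d)) :
    projFirstStd hN i (∑ k ∈ s, ψ k) = ∑ k ∈ s, projFirstStd hN i (ψ k) := by
  ext f
  simp [projFirstStd, WithLp.ofLp_sum, Finset.sum_apply, sum_ite_irrel]

lemma projFirstStd_single (g : Fin N → Fin d) (c : ℂ) :
    projFirstStd hN i (EuclideanSpace.single g c) =
      if g ⟨0, hN⟩ = i then EuclideanSpace.single g c else 0 := by
  ext f
  by_cases hf : f = g <;> by_cases hg : g ⟨0, hN⟩ = i <;> simp [projFirstStd, hf, hg]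

end ProjFirstStd

lemma norm_sum_smul_single_sq {κ ι : Type*} [Fintype κ] [Fintype ι] [DecidableEq ι]
    {u : κ → ι} (hu : Function.Injective u) (c : κ → ℂ) :
    ‖∑ k, c k • EuclideanSpace.single (u k) (1 : ℂ)‖ ^ 2 = ∑ k, ‖c k‖ ^ 2 := by
  have h :=
    ((EuclideanSpace.orthonormal_single (𝕜 := ℂ) (ι := ι)).comp u hu).inner_sum c c univ
  simp only [Function.comp_apply, inner_self_eq_norm_sq_to_K, Complex.conj_mul'] at h
  exact RCLike.ofReal_injective (K := ℂ) (by push_cast; exact h)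

/-- `√((N-1)!) · e_i ⊗ |S_{N-1}^{(i)}⟩`, for `N = m + 1`. -/
noncomputable def consAltSum {m : ℕ} (i : Fin (m + 1)) :
    EuclideanSpace ℂ (Fin (m + 1) → Fin (m + 1)) :=
  ∑ τ : Perm (Fin m),
    ((sign τ : ℤ) : ℂ) • EuclideanSpace.single (Fin.cons i (i.succAbove ∘ τ)) 1

lemma projFirstStd_singlet {m : ℕ} (hN : 0 < m + 1) (i : Fin (m + 1)) :
    projFirstStd hN i (singlet (m + 1)) =
      ((-1) ^ (i : ℕ) * ((Real.sqrt (m + 1).factorial : ℂ))⁻¹) • consAltSum i := by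
  simp only [singlet, projFirstStd_smul, projFirstStd_sum, projFirstStd_single, smul_ite,
    smul_zero]
  rw [Fin.mk_zero, ← sum_filter, sum_filter_apply_zero_eq, consAltSum, smul_sum, smul_sum]
  refine sum_congr rfl fun τ _ => ?_
  rw [sign_consSuccAbovePerm, coe_consSuccAbovePerm, smul_smul, smul_smul]
  congr 1
  push_cast
  ring

lemma prodState_subSinglet {m : ℕ} (hN : 0 < m + 1) (i : Fin (m + 1)) :
    prodState hN i (subSinglet i) = ((Real.sqrt m.factorial : ℂ))⁻¹ • consAltSum i := by
  ext f
  simp only [prodState, Nat.add_one_sub_one, Fin.zero_eta, subSinglet, add_tsub_cancel_right,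
    missing_eq_succAbove, PiLp.smul_apply, WithLp.ofLp_sum, WithLp.ofLp_smul, PiLp.ofLp_single,
    Finset.sum_apply, Pi.smul_apply, smul_eq_mul, consAltSum]
  rw [mul_left_comm, mul_sum]
  congr 1
  refine sum_congr rfl fun τ _ => ?_
  by_cases h0 : f 0 = i
  · obtain ⟨g, rfl⟩ : ∃ g, f = Fin.cons i g :=
      ⟨Fin.tail f, by rw [← h0, Fin.cons_self_tail]⟩
    simp only [Fin.cons_zero, if_true, one_mul, Pi.single_apply, mul_ite, mul_one, mul_zero,
      Fin.cons_inj, true_and]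
    rfl
  · simp only [Pi.single_apply, h0, if_false, zero_mul]
    rw [if_neg (by rintro rfl; simp at h0), mul_zero]

lemma norm_consAltSum_sq {m : ℕ} (i : Fin (m + 1)) : ‖consAltSum i‖ ^ 2 = m.factorial := by
  rw [consAltSum, norm_sum_smul_single_sq (cons_succAbove_comp_injective i)]
  simp [← Int.cast_pow, ← Units.val_pow_eq_pow_val, Int.units_sq, Fintype.card_perm]

lemma sqrt_factorial_succ (m : ℕ) :
    Real.sqrt (m + 1).factorial = Real.sqrt (m + 1 : ℕ) * Real.sqrt m.factorial := by
  rw [Nat.factorial_succ, Nat.cast_mul, Real.sqrt_mul (Nat.cast_nonneg _)]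

/-- Projecting the first tensor factor of `|S_N⟩` onto `e_i` yields,
up to normalization and sign, the product `e_i ⊗ |S_{N−1}^{(i)}⟩`; each outcome `i`
occurs with probability `1/N`. -/
theorem singlet_projection_first_factor {N : ℕ} (hN : 0 < N) (i : Fin N) :
    projFirstStd hN i (singlet N) =
      (((-1 : ℂ) ^ (i : ℕ)) * ((Real.sqrt N : ℂ))⁻¹) • prodState hN i (subSinglet i) ∧
    ‖projFirstStd hN i (singlet N)‖ ^ 2 = (N : ℝ)⁻¹ := by
  obtain ⟨m, rfl⟩ : ∃ m, N = m + 1 := ⟨N - 1, by omega⟩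
  rw [projFirstStd_singlet, prodState_subSinglet, smul_smul, sqrt_factorial_succ]
  refine ⟨congrArg (· • consAltSum i) (by push_cast; ring), ?_⟩
  rw [norm_smul, mul_pow, norm_consAltSum_sq]
  simp only [norm_mul, norm_pow, norm_neg, norm_one, one_pow, one_mul, norm_inv,
    Complex.norm_real, Real.norm_eq_abs, sq_abs, inv_pow, mul_pow, Real.sq_sqrt, Nat.cast_nonneg]
  field_simp
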